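/- If the number ρ of injected nodes and the interception constants satisfy: for a given target node v, ρ·τ paths of length 1 and 2 at most are available and (1-p_1^{ρτ}) < c_v/2 (where p_1 = 1 - (1-p_e)(1-p_n)), then node v is certifiably robust against any graph injection attack in B_{ρ,τ}(G) touching v only through direct edges. -/
import Mathlib


/-- Sample-wise corollary for 1-layer GNNs: with at most `ρτ` direct edges from
injected nodes, the worst-case interference probability is `1 - p₁^{ρτ}` with
`p₁ = 1 - (1-p_e)(1-p_n)`; if this is less than `c_v / 2`, where `c_v` is the
classification gap at node `v`, then the smoothed prediction at `v` is unchanged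
under any such attack. -/
theorem stmt19 {Y : Type*} [Fintype Y]
    (pe pn : ℝ) (hpe0 : 0 < pe) (hpe1 : pe < 1) (hpn0 : 0 < pn) (hpn1 : pn < 1)
    (ρ τ : ℕ) (p p' : Y → ℝ)
    (hp0 : ∀ y, 0 ≤ p y) (hp'0 : ∀ y, 0 ≤ p' y)
    (ystar : Y) (cv : ℝ)
    (hcv : ∀ y, y ≠ ystar → cv ≤ p ystar - p y)
    (hpert : ∀ y, |p y - p' y| ≤ 1 - (1 - (1 - pe) * (1 - pn)) ^ (ρ * τ))
    (hcert : 1 - (1 - (1 - pe) * (1 - pn)) ^ (ρ * τ) < cv / 2) :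
    ∀ y, y ≠ ystar → p' y < p' ystar := by
  intro y hy
  have h1 := abs_le.mp (hpert y)
  have h2 := abs_le.mp (hpert ystar)
  have h3 := hcv y hy
  linarith [h1.1, h1.2, h2.1, h2.2]
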